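/- For q ≥ 1 and unit complex numbers z₁, z₂, the characteristic polynomial of the q×q matrix H = z₁U + z̄₁U* + z₂V + z̄₂V* (with U the cyclic shift and V = diag(ω^k), ω = e^{2πi p/q}, gcd(p,q) = 1) depends on (z₁, z₂) only through its constant term, which equals, up to sign, z₁^q + z₁^{−q} + z₂^q + z₂^{−q} plus a constant independent of z₁, z₂. -/

import Mathlib

/-!
Fix `t` and `z₂` and regard `D(z) = det (t - H)` as a function of `z = z₁`. Conjugation by `V`
multiplies `U` by `ω`, `Uᴴ` by `ω⁻¹` and fixes the `V`-part of `H`, so `D(ω z) = D(z)`. Hence the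
polynomial `w ^ q D(w) = det (w² (-U) + w (t - z₂ V - z̄₂ Vᴴ) - Uᴴ)`, of degree at most `2q`, only
has monomials of degree `0`, `q` and `2q`; its extreme coefficients are `det (-Uᴴ)` and `det (-U)`,
both equal to `-1`, so `D(z) = c - z ^ q - z⁻¹ ^ q` on the unit circle. Conjugation by `U` plays the
same role for `z₂`, as `U V = ω⁻¹ V U`.
-/

open Polynomial

namespace Polynomial

variable {R : Type*} [CommRing R]

theorem coeff_comp_C_mul_X (p : R[X]) (a : R) (k : ℕ) :
    (p.comp (C a * X)).coeff k = p.coeff k * a ^ k := by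
  induction p using Polynomial.induction_on' with
  | add p r hp hr => simp [add_comp, hp, hr, add_mul]
  | monomial m c =>
    rw [← C_mul_X_pow_eq_monomial, mul_comp, C_comp, X_pow_comp, mul_pow, ← C_pow, ← mul_assoc,
      ← C_mul, coeff_C_mul_X_pow, coeff_C_mul_X_pow]
    split_ifs with h <;> simp [h]

theorem expand_contract_of_dvd {p : R[X]} {q : ℕ} (hq : q ≠ 0)
    (h : ∀ k, p.coeff k ≠ 0 → q ∣ k) : expand R q (contract q p) = p := by
  ext k
  rw [coeff_expand hq.bot_lt, coeff_contract hq]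
  split_ifs with hk
  · rw [Nat.div_mul_cancel hk]
  · exact (not_not.mp (mt (h k) hk)).symm

theorem eval_eq_of_natDegree_le_two {p : R[X]} (h : p.natDegree ≤ 2) (w : R) :
    p.eval w = p.coeff 0 + p.coeff 1 * w + p.coeff 2 * w ^ 2 := by
  rw [eval_eq_sum_range' (Nat.lt_succ_of_le h)]
  simp [Finset.sum_range_succ]

theorem eval_eq_of_comp_C_mul_X_eq [IsDomain R] {ω : R} {q : ℕ} (hω : IsPrimitiveRoot ω q)
    (hq : q ≠ 0) {p : R[X]} (hp : p.comp (C ω * X) = p) (hdeg : p.natDegree ≤ 2 * q) (w : R) :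
    p.eval w = p.coeff 0 + p.coeff q * w ^ q + p.coeff (2 * q) * w ^ (2 * q) := by
  have hdvd : ∀ k, p.coeff k ≠ 0 → q ∣ k := fun k hk ↦ hω.dvd_of_pow_eq_one k <|
    mul_left_cancel₀ hk <| by rw [← coeff_comp_C_mul_X, hp, mul_one]
  have hcontract : (contract q p).natDegree ≤ 2 := by
    rw [← expand_contract_of_dvd hq hdvd, natDegree_expand] at hdeg
    exact Nat.le_of_mul_le_mul_right hdeg hq.bot_lt
  conv_lhs => rw [← expand_contract_of_dvd hq hdvd]
  rw [expand_eval, eval_eq_of_natDegree_le_two hcontract, coeff_contract hq, coeff_contract hq,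
    coeff_contract hq, ← pow_mul]
  ring_nf

end Polynomial

theorem pow_val_add_one {M : Type*} [Monoid M] {ω : M} {q : ℕ} [NeZero q] (hω : ω ^ q = 1)
    (j : Fin q) : ω ^ ((j + 1 : Fin q) : ℕ) = ω * ω ^ (j : ℕ) := by
  rw [Fin.val_add, Fin.val_one', Nat.add_mod_mod, ← pow_eq_pow_mod _ hω, pow_succ']

theorem IsPrimitiveRoot.mem_unitary_complex {ω : ℂ} {q : ℕ} (hω : IsPrimitiveRoot ω q)
    (hq : q ≠ 0) : ω ∈ unitary ℂ :=
  Unitary.mem_iff_star_mul_self.mpr <| by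
    rw [Complex.star_def, ← Complex.inv_eq_conj (hω.norm'_eq_one hq),
      inv_mul_cancel₀ (hω.ne_zero hq)]

theorem Complex.isPrimitiveRoot_exp_of_gcd_eq_one (p : ℤ) {q : ℕ} (hq : q ≠ 0)
    (hpq : p.gcd q = 1) : IsPrimitiveRoot (exp (2 * Real.pi * I * p / q)) q := by
  have h : exp (2 * Real.pi * I * p / q) = exp (2 * Real.pi * I / q) ^ p := by
    rw [← exp_int_mul]
    ring_nf
  exact h ▸ (isPrimitiveRoot_exp q hq).zpow_of_gcd_eq_one p hpq

namespace Matrix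

variable {n R : Type*} [CommRing R]

noncomputable def quadPencil (M K N : Matrix n n R) : Matrix n n R[X] :=
  (X ^ 2 : R[X]) • M.map C + (X : R[X]) • K.map C + N.map C

theorem natDegree_quadPencil_apply_le (M K N : Matrix n n R) (i j : n) :
    (quadPencil M K N i j).natDegree ≤ 2 := by
  simp only [quadPencil, add_apply, smul_apply, map_apply, smul_eq_mul]
  compute_degree

variable [Fintype n] [DecidableEq n]

theorem natDegree_det_le_of_forall_natDegree_le {A : Matrix n n R[X]} {d : ℕ}
    (h : ∀ i j, (A i j).natDegree ≤ d) : A.det.natDegree ≤ Fintype.card n * d := by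
  rw [det_apply]
  refine natDegree_sum_le_of_forall_le _ _ fun σ _ ↦ (natDegree_smul_le _ _).trans ?_
  refine (natDegree_prod_le _ _).trans ?_
  exact (Finset.sum_le_card_nsmul _ _ d fun i _ ↦ h (σ i) i).trans_eq (by simp)

theorem coeff_det_of_forall_natDegree_le {A : Matrix n n R[X]} {d : ℕ}
    (h : ∀ i j, (A i j).natDegree ≤ d) :
    A.det.coeff (Fintype.card n * d) = (A.map (coeff · d)).det := by
  simp only [det_apply, finsetSum_coeff, coeff_smul]
  refine Finset.sum_congr rfl fun σ _ ↦ ?_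
  rw [← Finset.card_univ, coeff_prod_of_natDegree_le _ _ d fun i _ ↦ h (σ i) i]
  rfl

section QuadPencil

variable (M K N : Matrix n n R)

theorem eval_det_quadPencil (w : R) :
    (quadPencil M K N).det.eval w = (w ^ 2 • M + w • K + N).det := by
  rw [← coe_evalRingHom, RingHom.map_det]
  congr 1
  ext i j
  simp only [quadPencil, RingHom.mapMatrix_apply, coe_evalRingHom, map_apply, add_apply,
    smul_apply, smul_eq_mul, eval_add, eval_mul, eval_C, eval_pow, eval_X]

theorem coeff_zero_det_quadPencil : (quadPencil M K N).det.coeff 0 = N.det := by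
  rw [coeff_zero_eq_eval_zero, eval_det_quadPencil, zero_pow two_ne_zero, zero_smul, zero_smul,
    zero_add, zero_add]

theorem coeff_det_quadPencil_card_mul_two :
    (quadPencil M K N).det.coeff (Fintype.card n * 2) = M.det := by
  rw [coeff_det_of_forall_natDegree_le (natDegree_quadPencil_apply_le M K N)]
  congr 1
  ext i j
  simp [quadPencil]

end QuadPencil

section Twisted

variable {𝕜 : Type*} [Field 𝕜] [Nonempty n] {ω : 𝕜} {S M N K : Matrix n n 𝕜}

theorem det_quadPencil_eval_mul (hω : ω ^ Fintype.card n = 1) (hS : IsUnit S)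
    (hSM : S * M = ω • (M * S)) (hSN : S * N = ω⁻¹ • (N * S)) (hSK : Commute S K) (w : 𝕜) :
    ((ω * w) ^ 2 • M + (ω * w) • K + N).det = (w ^ 2 • M + w • K + N).det := by
  have hω₀ : ω ≠ 0 := ne_zero_pow Fintype.card_ne_zero (hω ▸ one_ne_zero)
  have hconj :
      ((ω * w) ^ 2 • M + (ω * w) • K + N) * S = ω • (S * (w ^ 2 • M + w • K + N)) := by
    simp only [Matrix.mul_add, Matrix.add_mul, Matrix.mul_smul, Matrix.smul_mul, hSM, hSN,
      hSK.eq, smul_add, smul_smul]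
    match_scalars <;> field_simp
  have hdet := congrArg det hconj
  rw [det_mul, det_smul, det_mul, hω, one_mul, mul_comm] at hdet
  exact mul_left_cancel₀ ((isUnit_iff_isUnit_det S).mp hS).ne_zero hdet

variable [Infinite 𝕜]

theorem exists_det_quadPencil_eq (hω : IsPrimitiveRoot ω (Fintype.card n)) (hS : IsUnit S)
    (hSM : S * M = ω • (M * S)) (hSN : S * N = ω⁻¹ • (N * S)) (hSK : Commute S K) :
    ∃ c, ∀ w : 𝕜, (w ^ 2 • M + w • K + N).det =
      N.det + c * w ^ Fintype.card n + M.det * w ^ (2 * Fintype.card n) := by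
  set P := (quadPencil M K N).det
  have hP : P.comp (C ω * X) = P := Polynomial.funext fun w ↦ by
    simp only [P, eval_comp, eval_mul, eval_C, eval_X, eval_det_quadPencil,
      det_quadPencil_eval_mul hω.pow_eq_one hS hSM hSN hSK]
  have hdeg : P.natDegree ≤ 2 * Fintype.card n := by
    rw [mul_comm]
    exact natDegree_det_le_of_forall_natDegree_le (natDegree_quadPencil_apply_le M K N)
  refine ⟨P.coeff (Fintype.card n), fun w ↦ ?_⟩
  rw [← eval_det_quadPencil, eval_eq_of_comp_C_mul_X_eq hω Fintype.card_ne_zero hP hdeg w,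
    coeff_zero_det_quadPencil, mul_comm 2, coeff_det_quadPencil_card_mul_two]

theorem det_smul_add_inv_smul_add (hω : IsPrimitiveRoot ω (Fintype.card n)) (hS : IsUnit S)
    (hSM : S * M = ω • (M * S)) (hSN : S * N = ω⁻¹ • (N * S)) (hSK : Commute S K) {z : 𝕜}
    (hz : z ≠ 0) :
    (z • M + z⁻¹ • N + K).det = (M + N + K).det + M.det * (z ^ Fintype.card n - 1) +
      N.det * (z⁻¹ ^ Fintype.card n - 1) := by
  obtain ⟨c, hc⟩ := exists_det_quadPencil_eq hω hS hSM hSN hSK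
  have hscale : ∀ z : 𝕜, z ≠ 0 →
      (z • M + z⁻¹ • N + K).det = z⁻¹ ^ Fintype.card n * (z ^ 2 • M + z • K + N).det := by
    intro z hz
    have hpencil : z ^ 2 • M + z • K + N = z • (z • M + z⁻¹ • N + K) := by
      simp only [smul_add, smul_smul]
      match_scalars <;> field_simp
    rw [hpencil, det_smul, ← mul_assoc, ← mul_pow, inv_mul_cancel₀ hz, one_pow, one_mul]
  have h₁ := hscale 1 one_ne_zero
  rw [one_smul, inv_one, one_smul] at h₁
  rw [hscale z hz, hc, h₁, hc]
  simp only [one_pow, one_mul, mul_one, inv_pow]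
  field_simp
  ring

end Twisted

theorem mul_conjTranspose_eq_of_mul_eq [StarRing R] {S M : Matrix n n R} {ω : R}
    (hS : S ∈ unitary (Matrix n n R)) (h : S * M = ω • (M * S)) :
    S * Mᴴ = star ω • (Mᴴ * S) := by
  have h' : Mᴴ * Sᴴ = star ω • (Sᴴ * Mᴴ) := by
    simpa only [conjTranspose_mul, conjTranspose_smul] using congrArg conjTranspose h
  have hSS : Sᴴ * S = 1 := Unitary.star_mul_self_of_mem hS
  have hSS' : S * Sᴴ = 1 := Unitary.mul_star_self_of_mem hS
  calc S * Mᴴ = S * (Mᴴ * Sᴴ) * S := by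
        rw [Matrix.mul_assoc, Matrix.mul_assoc, hSS, Matrix.mul_one]
    _ = star ω • (Mᴴ * S) := by
      rw [h', Matrix.mul_smul, Matrix.smul_mul, ← Matrix.mul_assoc, hSS', Matrix.one_mul]

theorem permMatrix_mem_unitaryGroup [StarRing R] (σ : Equiv.Perm n) :
    σ.permMatrix R ∈ unitaryGroup n R := by
  rw [mem_unitaryGroup_iff', star_eq_conjTranspose, conjTranspose_permMatrix, ← permMatrix_mul,
    mul_inv_cancel, permMatrix_one]

theorem diagonal_mem_unitaryGroup [StarRing R] {d : n → R} (hd : ∀ i, d i ∈ unitary R) :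
    diagonal d ∈ unitaryGroup n R := by
  rw [mem_unitaryGroup_iff', star_eq_conjTranspose, diagonal_conjTranspose, diagonal_mul_diagonal,
    ← diagonal_one]
  exact congrArg diagonal (funext fun i ↦ Unitary.star_mul_self_of_mem (hd i))

section WeylPair

open ComplexConjugate

variable [Nonempty n] {ω : ℂ}

theorem det_smul_add_conj_smul_add (hω : IsPrimitiveRoot ω (Fintype.card n))
    {S M K : Matrix n n ℂ} (hS : S ∈ unitary (Matrix n n ℂ)) (hSM : S * M = ω • (M * S))
    (hSK : Commute S K) {z : ℂ} (hz : ‖z‖ = 1) :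
    (z • M + conj z • Mᴴ + K).det = (M + Mᴴ + K).det + M.det * (z ^ Fintype.card n - 1) +
      Mᴴ.det * (z⁻¹ ^ Fintype.card n - 1) := by
  have hSM' : S * Mᴴ = ω⁻¹ • (Mᴴ * S) := by
    rw [mul_conjTranspose_eq_of_mul_eq hS hSM,
      Complex.inv_eq_conj (hω.norm'_eq_one Fintype.card_ne_zero)]
    rfl
  rw [← Complex.inv_eq_conj hz]
  exact det_smul_add_inv_smul_add hω (Unitary.isUnit_coe (U := ⟨S, hS⟩)) hSM hSM' hSK
    (by rintro rfl; simp at hz)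

theorem det_scalar_sub_weylPair (hω : IsPrimitiveRoot ω (Fintype.card n))
    {U V : Matrix n n ℂ} (hU : U ∈ unitary (Matrix n n ℂ)) (hV : V ∈ unitary (Matrix n n ℂ))
    (hVU : V * U = ω • (U * V)) (hdetU : (-U).det = -1) (hdetV : (-V).det = -1) (t : ℂ)
    {z₁ z₂ : ℂ} (hz₁ : ‖z₁‖ = 1) (hz₂ : ‖z₂‖ = 1) :
    (scalar n t - (z₁ • U + conj z₁ • Uᴴ + z₂ • V + conj z₂ • Vᴴ)).det =
      (scalar n t - (U + Uᴴ + V + Vᴴ)).det + 4 -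
        (z₁ ^ Fintype.card n + z₁⁻¹ ^ Fintype.card n + z₂ ^ Fintype.card n +
          z₂⁻¹ ^ Fintype.card n) := by
  have hVU' : V * -U = ω • (-U * V) := by rw [Matrix.mul_neg, hVU, Matrix.neg_mul, smul_neg]
  have hUV : U * -V = ω⁻¹ • (-V * U) := by
    rw [Matrix.mul_neg, Matrix.neg_mul, smul_neg, hVU, smul_smul,
      inv_mul_cancel₀ (hω.ne_zero Fintype.card_ne_zero), one_smul]
  have hcommU : Commute U Uᴴ :=
    (Unitary.mul_star_self_of_mem hU).trans (Unitary.star_mul_self_of_mem hU).symm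
  have hcommV : Commute V Vᴴ :=
    (Unitary.mul_star_self_of_mem hV).trans (Unitary.star_mul_self_of_mem hV).symm
  have hscalar (A : Matrix n n ℂ) : Commute A (scalar n t) :=
    (scalar_commute t (Commute.all t) A).symm
  have h₁ := det_smul_add_conj_smul_add hω hV (K := scalar n t - (z₂ • V + conj z₂ • Vᴴ)) hVU'
    ((hscalar V).sub_right (((Commute.refl V).smul_right z₂).add_right (hcommV.smul_right _))) hz₁
  have h₂ := det_smul_add_conj_smul_add hω.inv hU (K := scalar n t - (U + Uᴴ)) hUV
    ((hscalar U).sub_right ((Commute.refl U).add_right hcommU)) hz₂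
  rw [det_conjTranspose, hdetU, star_neg, star_one] at h₁
  rw [det_conjTranspose, hdetV, star_neg, star_one] at h₂
  have e₁ : scalar n t - (z₁ • U + conj z₁ • Uᴴ + z₂ • V + conj z₂ • Vᴴ) =
      z₁ • -U + conj z₁ • (-U)ᴴ + (scalar n t - (z₂ • V + conj z₂ • Vᴴ)) := by
    simp only [conjTranspose_neg, smul_neg]
    abel
  have e₂ : -U + (-U)ᴴ + (scalar n t - (z₂ • V + conj z₂ • Vᴴ)) =
      z₂ • -V + conj z₂ • (-V)ᴴ + (scalar n t - (U + Uᴴ)) := by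
    simp only [conjTranspose_neg, smul_neg]
    abel
  have e₃ : -V + (-V)ᴴ + (scalar n t - (U + Uᴴ)) = scalar n t - (U + Uᴴ + V + Vᴴ) := by
    simp only [conjTranspose_neg]
    abel
  rw [e₁, h₁, e₂, h₂, e₃]
  ring

end WeylPair

def cyclicShift (q : ℕ) [NeZero q] (R : Type*) [Zero R] [One R] : Matrix (Fin q) (Fin q) R :=
  of fun i j ↦ if i = j + 1 then 1 else 0

def clockMatrix (q : ℕ) (ω : R) : Matrix (Fin q) (Fin q) R :=
  diagonal fun k ↦ ω ^ (k : ℕ)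

variable {q : ℕ} {ω : R}

theorem clockMatrix_mem_unitaryGroup [StarRing R] (hω : ω ∈ unitary R) :
    clockMatrix q ω ∈ unitaryGroup (Fin q) R :=
  diagonal_mem_unitaryGroup fun _ ↦ pow_mem hω _

variable [NeZero q]

theorem cyclicShift_eq_permMatrix :
    cyclicShift q R = Equiv.Perm.permMatrix R (Equiv.subRight (1 : Fin q)) := by
  ext i j
  simp [cyclicShift, PEquiv.toMatrix_apply, sub_eq_iff_eq_add]

theorem cyclicShift_mem_unitaryGroup [StarRing R] :
    cyclicShift q R ∈ unitaryGroup (Fin q) R := by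
  rw [cyclicShift_eq_permMatrix]
  exact permMatrix_mem_unitaryGroup _

theorem det_neg_cyclicShift : (-cyclicShift q R).det = -1 := by
  have hσ : (Equiv.subRight (1 : Fin q) : Equiv.Perm (Fin q)) = (finRotate q)⁻¹ := by
    ext i
    simp
  obtain ⟨m, rfl⟩ := Nat.exists_eq_succ_of_ne_zero (NeZero.ne q)
  rw [det_neg, cyclicShift_eq_permMatrix, det_permutation, hσ, Equiv.Perm.sign_inv,
    sign_finRotate]
  simp [pow_succ, ← mul_pow]

theorem det_neg_clockMatrix [IsDomain R] (hω : IsPrimitiveRoot ω q) :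
    (-clockMatrix q ω).det = -1 := by
  -- `∏ₖ (0 - ω ^ k)` is `X ^ q - 1` evaluated at `0`
  have hq := NeZero.ne q
  have h := congrArg (eval 0) (X_pow_sub_C_eq_prod hω hq.bot_lt (one_pow q))
  simp only [eval_sub, eval_pow, eval_X, eval_C, eval_prod, mul_one, zero_pow hq, zero_sub] at h
  rw [clockMatrix, diagonal_neg, det_diagonal, Fin.prod_univ_eq_prod_range (fun k ↦ -ω ^ k), ← h]

theorem clockMatrix_mul_cyclicShift (hω : ω ^ q = 1) :
    clockMatrix q ω * cyclicShift q R = ω • (cyclicShift q R * clockMatrix q ω) := by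
  ext i j
  simp only [clockMatrix, cyclicShift, diagonal_mul, mul_diagonal, of_apply, smul_apply,
    smul_eq_mul]
  split_ifs with h
  · rw [h, pow_val_add_one hω]; ring
  · simp

open ComplexConjugate in
theorem charpoly_clockMatrix_cyclicShift {ω : ℂ} (hω : IsPrimitiveRoot ω q) {z₁ z₂ : ℂ}
    (hz₁ : ‖z₁‖ = 1) (hz₂ : ‖z₂‖ = 1) :
    (z₁ • cyclicShift q ℂ + conj z₁ • (cyclicShift q ℂ)ᴴ + z₂ • clockMatrix q ω +
        conj z₂ • (clockMatrix q ω)ᴴ).charpoly =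
      (cyclicShift q ℂ + (cyclicShift q ℂ)ᴴ + clockMatrix q ω + (clockMatrix q ω)ᴴ).charpoly +
        C 4 - C (z₁ ^ q + z₁⁻¹ ^ q + z₂ ^ q + z₂⁻¹ ^ q) := by
  have hω' : IsPrimitiveRoot ω (Fintype.card (Fin q)) := by rwa [Fintype.card_fin]
  refine Polynomial.funext fun t ↦ ?_
  simp only [eval_charpoly, eval_add, eval_sub, eval_C]
  rw [det_scalar_sub_weylPair hω' cyclicShift_mem_unitaryGroup
    (clockMatrix_mem_unitaryGroup (hω.mem_unitary_complex (NeZero.ne q)))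
    (clockMatrix_mul_cyclicShift hω.pow_eq_one) det_neg_cyclicShift (det_neg_clockMatrix hω) t
    hz₁ hz₂, Fintype.card_fin]

end Matrix

open Matrix Complex in
theorem stmt_13 (q : ℕ) [NeZero q] (p : ℤ) (hpq : Int.gcd p q = 1)
    (U V : Matrix (Fin q) (Fin q) ℂ)
    (hU : U = Matrix.of fun i j : Fin q => if i = j + 1 then 1 else 0)
    (hV : V = Matrix.diagonal fun k : Fin q =>
      Complex.exp (2 * Real.pi * Complex.I * p * (k : ℕ) / q)) :
    ∃ (P : Polynomial ℂ) (ε : ℂ), (ε = 1 ∨ ε = -1) ∧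
      ∀ z₁ z₂ : ℂ, ‖z₁‖ = 1 → ‖z₂‖ = 1 →
        (z₁ • U + (starRingEnd ℂ z₁) • Uᴴ + z₂ • V + (starRingEnd ℂ z₂) • Vᴴ).charpoly =
          P + Polynomial.C (ε * (z₁ ^ q + z₁⁻¹ ^ q + z₂ ^ q + z₂⁻¹ ^ q)) := by
  have hω := Complex.isPrimitiveRoot_exp_of_gcd_eq_one p (NeZero.ne q) hpq
  have hU' : U = cyclicShift q ℂ := hU
  have hV' : V = clockMatrix q (Complex.exp (2 * Real.pi * Complex.I * p / q)) := by
    rw [hV, clockMatrix]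
    congr 1
    funext k
    rw [← Complex.exp_nat_mul]
    ring_nf
  refine ⟨(U + Uᴴ + V + Vᴴ).charpoly + Polynomial.C 4, -1, Or.inr rfl, fun z₁ z₂ hz₁ hz₂ ↦ ?_⟩
  rw [hU', hV', charpoly_clockMatrix_cyclicShift hω hz₁ hz₂, neg_one_mul, Polynomial.C_neg,
    sub_eq_add_neg]
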